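/- arXiv:1604.04859 — 6 statements merged into one kernel-verified Lean document; each statement's English description precedes it below -/
import Mathlib

section
/- The canonical assignment maximizes the gain from trade: for any finite set P' of users with costs c : P' → ℝ and finite set B' of slots with values v : B' → ℝ (all costs and values distinct, and no cost equal to a value), the canonical assignment S_c(P', B') — which sorts slots in decreasing value order b_1,...,b_{|B'|} and users in increasing cost order p_1,...,p_{|P'|}, and matches p_i to b_i for each i ≤ min{|B'|,|P'|} if and only if v(b_i) > c(p_i) — achieves gain from trade GfT(S) = Σ_{(p,b)∈S}(v(b) − c(p)) at least as large as any matching (injective partial matching) between P' and B'. -/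
lemma fin_le_strictMono {k : ℕ} (e : Fin k → ℕ) (he : StrictMono e) :
    ∀ i : Fin k, (i : ℕ) ≤ e i := by
  intro ⟨j, hj⟩
  induction j with
  | zero => exact Nat.zero_le _
  | succ j ih =>
    have h1 : e ⟨j, Nat.lt_of_succ_lt hj⟩ < e ⟨j + 1, hj⟩ := he (by simp)
    exact Nat.succ_le_of_lt (lt_of_le_of_lt (ih (Nat.lt_of_succ_lt hj)) h1)

lemma sum_range_card_le {T : Finset ℕ} {f : ℕ → ℝ} (hf : Monotone f) :
    ∑ i ∈ Finset.range T.card, f i ≤ ∑ i ∈ T, f i := by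
  classical
  set k := T.card with hk
  have hT : T.card = k := rfl
  let e := T.orderEmbOfFin hT
  have hle : ∀ i : Fin k, (i : ℕ) ≤ e i := fin_le_strictMono e e.strictMono
  have h1 : ∑ i ∈ T, f i = ∑ i : Fin k, f (e i) := by
    have himg : Finset.image (fun i : Fin k => (e i : ℕ)) Finset.univ = T := by
      apply Finset.eq_of_subset_of_card_le
      · intro x hx
        simp only [Finset.mem_image] at hx
        obtain ⟨i, _, rfl⟩ := hx
        exact T.orderEmbOfFin_mem hT i
      · rw [Finset.card_image_of_injective _ e.injective, Finset.card_univ, Fintype.card_fin, hT]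
    rw [← himg, Finset.sum_image (fun x _ y _ h => e.injective h)]
  rw [h1, Finset.sum_range fun i => f i]
  exact Finset.sum_le_sum fun i _ => hf (hle i)

/-- Users are indexed `0,…,n-1` in increasing cost order
(`StrictMono c`), slots `0,…,m-1` in decreasing value order (`StrictAnti v`);
all costs/values are distinct and no cost equals a value.  The canonical
assignment matches the `i`-th cheapest user to the `i`-th most valuable slot
(for `i < min n m`) iff `v i > c i`.  Its gain from trade is at least that of
any injective partial matching `S` between the users and the slots. -/
theorem stmt_0 (n m : ℕ) (c v : ℕ → ℝ)
    (hc : StrictMono c) (hv : StrictAnti v)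
    (hcv : ∀ i j : ℕ, c i ≠ v j)
    (S : Finset (ℕ × ℕ))
    (hS : ∀ x ∈ S, x.1 < n ∧ x.2 < m)
    (hinj₁ : ∀ x ∈ S, ∀ y ∈ S, x.1 = y.1 → x = y)
    (hinj₂ : ∀ x ∈ S, ∀ y ∈ S, x.2 = y.2 → x = y) :
    ∑ x ∈ S, (v x.2 - c x.1) ≤
      ∑ i ∈ (Finset.range (min n m)).filter (fun i => c i < v i), (v i - c i) := by
  classical
  set k := S.card with hk
  set T1 := S.image Prod.fst with hT1
  set T2 := S.image Prod.snd with hT2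
  have hc1 : T1.card = k := Finset.card_image_of_injOn fun x hx y hy h => hinj₁ x hx y hy h
  have hc2 : T2.card = k := Finset.card_image_of_injOn fun x hx y hy h => hinj₂ x hx y hy h
  have hs1 : T1 ⊆ Finset.range n := by
    intro i hi; simp only [hT1, Finset.mem_image] at hi
    obtain ⟨x, hx, rfl⟩ := hi; exact Finset.mem_range.2 (hS x hx).1
  have hs2 : T2 ⊆ Finset.range m := by
    intro i hi; simp only [hT2, Finset.mem_image] at hi
    obtain ⟨x, hx, rfl⟩ := hi; exact Finset.mem_range.2 (hS x hx).2
  have hkn : k ≤ n := by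
    have := Finset.card_le_card hs1; rwa [hc1, Finset.card_range] at this
  have hkm : k ≤ m := by
    have := Finset.card_le_card hs2; rwa [hc2, Finset.card_range] at this
  -- bound sum of c over users below by sum over range k
  have he1 : ∑ i ∈ T1, c i = ∑ x ∈ S, c x.1 :=
    Finset.sum_image fun x hx y hy h => hinj₁ x hx y hy h
  have he2 : ∑ i ∈ T2, v i = ∑ x ∈ S, v x.2 :=
    Finset.sum_image fun x hx y hy h => hinj₂ x hx y hy h
  have hcb : ∑ i ∈ Finset.range k, c i ≤ ∑ x ∈ S, c x.1 := by
    rw [← he1]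
    calc ∑ i ∈ Finset.range k, c i = ∑ i ∈ Finset.range T1.card, c i := by rw [hc1]
    _ ≤ _ := sum_range_card_le hc.monotone
  have hvb : ∑ x ∈ S, v x.2 ≤ ∑ i ∈ Finset.range k, v i := by
    rw [← he2]
    have := sum_range_card_le (T := T2) (f := fun i => -v i)
      (fun a b hab => neg_le_neg (hv.antitone hab))
    rw [hc2] at this
    have := neg_le_neg this
    simpa using this
  have step1 : ∑ x ∈ S, (v x.2 - c x.1) ≤ ∑ i ∈ Finset.range k, (v i - c i) := by
    rw [Finset.sum_sub_distrib, Finset.sum_sub_distrib]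
    exact sub_le_sub hvb hcb
  refine step1.trans ?_
  have step2 : ∑ i ∈ Finset.range k, (v i - c i) ≤
      ∑ i ∈ (Finset.range k).filter (fun i => c i < v i), (v i - c i) := by
    rw [← Finset.sum_filter_add_sum_filter_not (Finset.range k) (fun i => c i < v i)]
    have : ∑ i ∈ (Finset.range k).filter (fun i => ¬ c i < v i), (v i - c i) ≤ 0 := by
      apply Finset.sum_nonpos
      intro i hi
      simp only [Finset.mem_filter, not_lt] at hi
      linarith [hi.2]
    linarith
  refine step2.trans ?_
  apply Finset.sum_le_sum_of_subset_of_nonneg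
  · apply Finset.filter_subset_filter
    exact Finset.range_subset_range.2 (le_min hkn hkm)
  · intro i hi _
    simp only [Finset.mem_filter] at hi
    linarith [hi.2]
end

section
/- Let τ = |S_c(P,B)| and define ℓ(P,B) as the value of the slot at location τ of S_c(P,B). Then c(p) ≤ ℓ(P,B) ≤ v(b) for every user p ∈ P_o and slot b ∈ B_o. -/
/-- Let `τ` be the size of the canonical assignment (so the
slot at location `τ`, 1-based, has index `τ - 1`), and let
`ℓ(P,B) = v (τ - 1)` be its value.  Then `c p ≤ ℓ(P,B) ≤ v b` for every
matched user `p ∈ P_o` and matched slot `b ∈ B_o`. -/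
theorem stmt_3 (n m : ℕ) (c v : ℕ → ℝ)
    (hc : StrictMono c) (hv : StrictAnti v)
    (hcv : ∀ i j : ℕ, c i ≠ v j)
    (τ : ℕ)
    (hτ : τ = ((Finset.range (min n m)).filter (fun i => c i < v i)).card)
    (hτpos : 0 < τ) :
    ∀ i ∈ (Finset.range (min n m)).filter (fun i => c i < v i),
      ∀ j ∈ (Finset.range (min n m)).filter (fun i => c i < v i),
        c i ≤ v (τ - 1) ∧ v (τ - 1) ≤ v j := by
  set S := (Finset.range (min n m)).filter (fun i => c i < v i) with hS
  -- S is downward closed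
  have dc : ∀ i ∈ S, ∀ k, k ≤ i → k ∈ S := by
    intro i hi k hk
    simp only [hS, Finset.mem_filter, Finset.mem_range] at hi ⊢
    rcases eq_or_lt_of_le hk with rfl | hk
    · exact hi
    · exact ⟨lt_trans hk hi.1, lt_trans (lt_trans (hc hk) hi.2) (hv hk)⟩
  -- every element of S is < τ
  have hub : ∀ i ∈ S, i < τ := by
    intro i hi
    by_contra h
    push_neg at h
    have hsub : Finset.range (i + 1) ⊆ S := by
      intro k hk
      exact dc i hi k (Nat.lt_succ_iff.mp (Finset.mem_range.mp hk))
    have := Finset.card_le_card hsub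
    simp only [Finset.card_range, ← hτ] at this
    omega
  -- τ - 1 ∈ S
  have hmem : τ - 1 ∈ S := by
    by_contra h
    have hsub : S ⊆ Finset.range (τ - 1) := by
      intro i hi
      rw [Finset.mem_range]
      by_contra h'
      push_neg at h'
      exact h (dc i hi (τ - 1) h')
    have := Finset.card_le_card hsub
    simp only [Finset.card_range, ← hτ] at this
    omega
  have hcv' : c (τ - 1) < v (τ - 1) := (Finset.mem_filter.mp hmem).2
  intro i hi j hj
  constructor
  · calc c i ≤ c (τ - 1) := hc.monotone (by have := hub i hi; omega)
      _ ≤ v (τ - 1) := le_of_lt hcv'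
  · exact hv.antitone (by have := hub j hj; omega)
end

section
/- Let S_c(P(M_T), B(A_T)) be the canonical assignment restricted to users of mediators in M_T and slots of advertisers in A_T. Then min{|P_o ∩ P(M_T)|, |B_o ∩ B(A_T)|} ≤ |S_c(P(M_T), B(A_T))| ≤ max{|P_o ∩ P(M_T)|, |B_o ∩ B(A_T)|}. -/
/-!
The full canonical assignment matches exactly the locations below `τ = |P_o|`. In the restricted
assignment, location `j` pairs the `j`-th elements `p` of `PT` and `b` of `BT`, and `p < τ` iff
`j < |P_o ∩ PT|` (likewise for `b`). If both lie below `τ`, then `k = max p b` is matched in the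
full assignment and `c p ≤ c k < v k ≤ v b`. If neither does, a match `c p < v b` would give
`c k < v k` for `k = min p b`, a location `k ≥ τ` matched in the full assignment.
-/

open Finset

/-- Size of the canonical assignment restricted to users `PT` and slots `BT`:
sort the user indices of `PT` increasingly (by `StrictMono c` this is the
increasing-cost order) and the slot indices of `BT` increasingly (by
`StrictAnti v` this is the decreasing-value order), match them location by
location, and count the locations where the value exceeds the cost. -/
noncomputable def canonSize (c v : ℕ → ℝ) (PT BT : Finset ℕ) : ℕ :=
  (List.zip ((PT.sort (· ≤ ·)).map c) ((BT.sort (· ≤ ·)).map v)).countP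
    (fun x => decide (x.1 < x.2))

theorem List.countP_eq_card_filter_range {α : Type*} (q : α → Bool) (d : α) (l : List α) :
    l.countP q = #{i ∈ Finset.range l.length | q (l.getD i d)} := by
  induction l with
  | nil => simp
  | cons a l ih =>
    rw [Finset.card_filter, List.length_cons, Finset.sum_range_succ']
    simp only [List.getD_cons_succ, List.getD_cons_zero, ← Finset.card_filter]
    rw [List.countP_cons, ← ih]

theorem Finset.exists_eq_range_of_isLowerSet {s : Finset ℕ} (hs : IsLowerSet (s : Set ℕ)) :
    ∃ τ, s = range τ := by
  obtain huniv | ⟨τ, hτ⟩ := hs.eq_univ_or_Iio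
  · exact absurd (huniv ▸ s.finite_toSet) Set.infinite_univ
  · exact ⟨τ, coe_injective (by rw [hτ, coe_range])⟩

namespace Nat

theorem nth_mem_eq_getD_sort (s : Finset ℕ) (j : ℕ) :
    nth (· ∈ s) j = (s.sort (· ≤ ·)).getD j 0 := by
  rw [nth_eq_getD_sort (p := (· ∈ s)) s.finite_toSet]
  congr
  exact s.finite_toSet_toFinset

theorem nth_mem_finset_of_lt_card {s : Finset ℕ} {j : ℕ} (hj : j < #s) :
    nth (· ∈ s) j ∈ s :=
  nth_mem_of_lt_card (p := (· ∈ s)) s.finite_toSet (by rwa [Finset.finite_toSet_toFinset])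

theorem lt_count_mem_of_nth_lt {s : Finset ℕ} {j n : ℕ} (hj : j < #s)
    (h : nth (· ∈ s) j < n) : j < count (· ∈ s) n :=
  count_nth_of_lt_card_finite (p := (· ∈ s)) s.finite_toSet
      (by rwa [Finset.finite_toSet_toFinset]) ▸
    count_strict_mono (nth_mem_finset_of_lt_card hj) h

theorem count_mem_eq_card_range_inter (s : Finset ℕ) (n : ℕ) :
    count (· ∈ s) n = #(range n ∩ s) := by
  rw [count_eq_card_filter_range, filter_mem_eq_inter]

theorem count_mem_le_card (s : Finset ℕ) (n : ℕ) : count (· ∈ s) n ≤ #s :=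
  count_mem_eq_card_range_inter s n ▸ card_le_card inter_subset_right

end Nat

theorem canonSize_eq_card_filter (c v : ℕ → ℝ) (PT BT : Finset ℕ) :
    canonSize c v PT BT =
      #{j ∈ range (min #PT #BT) | c (Nat.nth (· ∈ PT) j) < v (Nat.nth (· ∈ BT) j)} := by
  rw [canonSize, List.zip_map, List.countP_map, List.countP_eq_card_filter_range _ (0, 0),
    List.length_zip, length_sort, length_sort]
  congr 1
  refine Finset.filter_congr fun j hj => ?_
  rw [mem_range, lt_min_iff] at hj
  simp [List.getElem_zip, Nat.nth_mem_eq_getD_sort, hj.1, hj.2]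

section Bounds

variable {c v : ℕ → ℝ}

theorem lt_of_lt_at_max (hc : Monotone c) (hv : Antitone v) {p b : ℕ}
    (h : c (max p b) < v (max p b)) : c p < v b :=
  (hc (le_max_left p b)).trans_lt (h.trans_le (hv (le_max_right p b)))

theorem lt_at_min_of_lt (hc : Monotone c) (hv : Antitone v) {p b : ℕ} (h : c p < v b) :
    c (min p b) < v (min p b) :=
  (hc (min_le_left p b)).trans_lt (h.trans_le (hv (min_le_right p b)))

theorem min_count_le_canonSize (hc : Monotone c) (hv : Antitone v) {τ : ℕ}
    (hτ : ∀ i < τ, c i < v i) (PT BT : Finset ℕ) :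
    min (Nat.count (· ∈ PT) τ) (Nat.count (· ∈ BT) τ) ≤ canonSize c v PT BT := by
  rw [canonSize_eq_card_filter, ← card_range (min _ _)]
  refine card_le_card fun j hj => ?_
  rw [mem_range, lt_min_iff] at hj
  obtain ⟨hjP, hjB⟩ := hj
  rw [mem_filter, mem_range, lt_min_iff]
  refine ⟨⟨hjP.trans_le (Nat.count_mem_le_card PT τ),
    hjB.trans_le (Nat.count_mem_le_card BT τ)⟩, lt_of_lt_at_max hc hv (hτ _ ?_)⟩
  exact max_lt (Nat.nth_lt_of_lt_count hjP) (Nat.nth_lt_of_lt_count hjB)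

theorem canonSize_le_max_count (hc : Monotone c) (hv : Antitone v) {n m τ : ℕ}
    (hτ : ∀ k < min n m, c k < v k → k < τ)
    {PT BT : Finset ℕ} (hPT : PT ⊆ range n) (hBT : BT ⊆ range m) :
    canonSize c v PT BT ≤ max (Nat.count (· ∈ PT) τ) (Nat.count (· ∈ BT) τ) := by
  rw [canonSize_eq_card_filter, ← card_range (max _ _)]
  refine card_le_card fun j hj => ?_
  rw [mem_filter, mem_range, lt_min_iff] at hj
  obtain ⟨⟨hjP, hjB⟩, hmatch⟩ := hj
  set p := Nat.nth (· ∈ PT) j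
  set b := Nat.nth (· ∈ BT) j
  have hp : p < n := mem_range.1 (hPT (Nat.nth_mem_finset_of_lt_card hjP))
  have hb : b < m := mem_range.1 (hBT (Nat.nth_mem_finset_of_lt_card hjB))
  have hmin : min p b < τ := hτ _ (min_lt_min hp hb) (lt_at_min_of_lt hc hv hmatch)
  rw [mem_range, lt_max_iff]
  rcases min_lt_iff.1 hmin with h | h
  · exact .inl (Nat.lt_count_mem_of_nth_lt hjP h)
  · exact .inr (Nat.lt_count_mem_of_nth_lt hjB h)

end Bounds

-- `PT`, `BT` are the users of `M_T` and the slots of `A_T`; the full canonical assignment matches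
-- user `i` with slot `i`, so `Po` encodes both `P_o` and `B_o`.
theorem stmt_4_general (n m : ℕ) (c v : ℕ → ℝ)
    (hc : StrictMono c) (hv : StrictAnti v)
    (PT BT : Finset ℕ) (hPT : PT ⊆ Finset.range n) (hBT : BT ⊆ Finset.range m)
    (Po : Finset ℕ)
    (hPo : Po = (Finset.range (min n m)).filter (fun i => c i < v i)) :
    min ((Po ∩ PT).card) ((Po ∩ BT).card) ≤ canonSize c v PT BT ∧
      canonSize c v PT BT ≤ max ((Po ∩ PT).card) ((Po ∩ BT).card) := by
  have hlower : IsLowerSet (Po : Set ℕ) := by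
    intro a b hba ha
    simp only [hPo, coe_filter, mem_range, Set.mem_ofPred_eq] at ha ⊢
    exact ⟨hba.trans_lt ha.1, (hc.monotone hba).trans_lt (ha.2.trans_le (hv.antitone hba))⟩
  obtain ⟨τ, rfl⟩ := exists_eq_range_of_isLowerSet hlower
  have hτ (i : ℕ) : i < τ ↔ i < min n m ∧ c i < v i := by
    simpa using congrArg (i ∈ ·) hPo
  simp only [← Nat.count_mem_eq_card_range_inter]
  exact ⟨min_count_le_canonSize hc.monotone hv.antitone (fun i hi => ((hτ i).1 hi).2) PT BT,
    canonSize_le_max_count hc.monotone hv.antitone (fun k hk hck => (hτ k).2 ⟨hk, hck⟩)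
      hPT hBT⟩

/-- `min {|P_o ∩ P(M_T)|, |B_o ∩ B(A_T)|} ≤ |S_c(P(M_T),B(A_T))|
≤ max {|P_o ∩ P(M_T)|, |B_o ∩ B(A_T)|}`, where `PT` (resp. `BT`) is the index
set of users of mediators in `M_T` (resp. slots of advertisers in `A_T`), and
`Po` is the set of matched locations of the full canonical assignment. -/
theorem stmt_4 (n m : ℕ) (c v : ℕ → ℝ)
    (hc : StrictMono c) (hv : StrictAnti v)
    (hcv : ∀ i j : ℕ, c i ≠ v j)
    (PT BT : Finset ℕ) (hPT : PT ⊆ Finset.range n) (hBT : BT ⊆ Finset.range m)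
    (Po : Finset ℕ)
    (hPo : Po = (Finset.range (min n m)).filter (fun i => c i < v i)) :
    min ((Po ∩ PT).card) ((Po ∩ BT).card) ≤ canonSize c v PT BT ∧
      canonSize c v PT BT ≤ max ((Po ∩ PT).card) ((Po ∩ BT).card) :=
  stmt_4_general n m c v hc hv PT BT hPT hBT Po hPo
end

section
/- (Concentration for block sampling.) Let B' ⊆ B_o be a set of slots partitioned among advertisers such that each advertiser contributes at most ατ slots, where |B_o| = τ. Let B'[q] be the random subset obtained by including, independently for each advertiser a with probability q, all slots of a that lie in B'. Then for every β ∈ (0,1], Pr[| |B'[q]| − q·|B'| | ≥ βτ] ≤ 2·exp(−2β²/α). -/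
open MeasureTheory ProbabilityTheory

/-!
The centred contribution `X a · w a - q · w a` of advertiser `a` ranges in an interval of
length `w a`, so by Hoeffding's lemma it is sub-Gaussian with variance proxy `w a ^ 2 / 4`.
Independence adds the proxies, and `∑ w a ^ 2 ≤ ατ²` because every block has at most `ατ` slots
and there are at most `τ` slots in total. The two-sided Chernoff bound at `βτ` then gives
`2 exp(-(βτ)² / (2 · ατ²/4)) = 2 exp(-2β²/α)`.
-/

namespace ProbabilityTheory.HasSubgaussianMGF

variable {Ω : Type*} [MeasurableSpace Ω] {μ : Measure Ω} {X : Ω → ℝ} {c : NNReal}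

lemma mono {c' : NNReal} (h : HasSubgaussianMGF X c μ) (hc : c ≤ c') :
    HasSubgaussianMGF X c' μ where
  integrable_exp_mul := h.integrable_exp_mul
  mgf_le t := (h.mgf_le t).trans (Real.exp_le_exp.2 (by gcongr))

lemma measure_abs_ge_le (h : HasSubgaussianMGF X c μ) {ε : ℝ} (hε : 0 ≤ ε) :
    μ.real {ω | ε ≤ |X ω|} ≤ 2 * Real.exp (-ε ^ 2 / (2 * c)) := by
  have hsplit : {ω | ε ≤ |X ω|} = {ω | ε ≤ X ω} ∪ {ω | ε ≤ (-X) ω} := by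
    ext ω
    simp [le_abs, le_neg]
  calc μ.real {ω | ε ≤ |X ω|}
      ≤ μ.real {ω | ε ≤ X ω} + μ.real {ω | ε ≤ (-X) ω} := hsplit ▸ measureReal_union_le _ _
    _ ≤ Real.exp (-ε ^ 2 / (2 * c)) + Real.exp (-ε ^ 2 / (2 * c)) :=
      add_le_add (h.measure_ge_le hε) (h.neg.measure_ge_le hε)
    _ = 2 * Real.exp (-ε ^ 2 / (2 * c)) := by ring

end ProbabilityTheory.HasSubgaussianMGF

lemma eq_indicator_of_forall_eq_zero_or_one {Ω : Type*} {X : Ω → ℝ}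
    (hX : ∀ ω, X ω = 0 ∨ X ω = 1) : X = {ω | X ω = 1}.indicator 1 := by
  funext ω
  rcases hX ω with h | h <;> simp [h]

section Bernoulli

variable {Ω : Type*} [MeasurableSpace Ω] {μ : Measure Ω} {X : Ω → ℝ}

lemma integral_eq_of_forall_eq_zero_or_one {q : ℝ} (hX : Measurable X)
    (hXval : ∀ ω, X ω = 0 ∨ X ω = 1) (hXdist : μ {ω | X ω = 1} = ENNReal.ofReal q)
    (hq : 0 ≤ q) : μ[X] = q := by
  have hs : MeasurableSet {ω | X ω = 1} := hX (measurableSet_singleton 1)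
  rw [eq_indicator_of_forall_eq_zero_or_one hXval, integral_indicator_one hs, measureReal_def,
    hXdist, ENNReal.toReal_ofReal hq]

lemma hasSubgaussianMGF_mul_const_sub_of_bernoulli [IsProbabilityMeasure μ] {q w : ℝ}
    (hX : Measurable X) (hXval : ∀ ω, X ω = 0 ∨ X ω = 1)
    (hXdist : μ {ω | X ω = 1} = ENNReal.ofReal q) (hq : 0 ≤ q) (hw : 0 ≤ w) :
    HasSubgaussianMGF (fun ω ↦ X ω * w - q * w) ((‖w‖₊ / 2) ^ 2) μ := by
  have hrange : ∀ᵐ ω ∂μ, X ω * w ∈ Set.Icc 0 w := ae_of_all _ fun ω ↦ by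
    rcases hXval ω with h | h <;> simp [h, hw]
  have hmean : μ[fun ω ↦ X ω * w] = q * w := by
    rw [integral_mul_const, integral_eq_of_forall_eq_zero_or_one hX hXval hXdist hq]
  simpa [hmean] using hasSubgaussianMGF_of_mem_Icc (hX.mul_const w).aemeasurable hrange

end Bernoulli

lemma Finset.sum_sq_le_mul_of_le {ι : Type*} {s : Finset ι} {w : ι → ℝ} {M S : ℝ}
    (hw0 : ∀ a ∈ s, 0 ≤ w a) (hwM : ∀ a ∈ s, w a ≤ M) (hM : 0 ≤ M) (hS : ∑ a ∈ s, w a ≤ S) :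
    ∑ a ∈ s, w a ^ 2 ≤ M * S :=
  calc ∑ a ∈ s, w a ^ 2
      ≤ ∑ a ∈ s, M * w a := Finset.sum_le_sum fun a ha ↦ by
        rw [sq]; exact mul_le_mul_of_nonneg_right (hwM a ha) (hw0 a ha)
    _ = M * ∑ a ∈ s, w a := (Finset.mul_sum _ _ _).symm
    _ ≤ M * S := mul_le_mul_of_nonneg_left hS hM

theorem stmt_7_general {Ω : Type*} [MeasurableSpace Ω] (μ : Measure Ω)
    [IsProbabilityMeasure μ]
    {ι : Type*} [Fintype ι]
    (w : ι → ℝ) (α τ q β : ℝ)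
    (hα : 0 < α) (hτ : 0 < τ)
    (hw0 : ∀ a, 0 ≤ w a) (hwα : ∀ a, w a ≤ α * τ)
    (hwsum : ∑ a, w a ≤ τ)
    (hq0 : 0 ≤ q)
    (X : ι → Ω → ℝ)
    (hXmeas : ∀ a, Measurable (X a))
    (hXval : ∀ a ω, X a ω = 0 ∨ X a ω = 1)
    (hXdist : ∀ a, μ {ω | X a ω = 1} = ENNReal.ofReal q)
    (hXindep : iIndepFun X μ)
    (hβ : 0 < β) :
    μ {ω | β * τ ≤ |(∑ a, X a ω * w a) - q * ∑ a, w a|} ≤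
      ENNReal.ofReal (2 * Real.exp (-2 * β ^ 2 / α)) := by
  have hindep : iIndepFun (fun a ω ↦ X a ω * w a - q * w a) μ :=
    hXindep.comp (fun a x ↦ x * w a - q * w a) fun a ↦ by fun_prop
  have hsum := HasSubgaussianMGF.sum_of_iIndepFun hindep (s := Finset.univ) fun a _ ↦
    hasSubgaussianMGF_mul_const_sub_of_bernoulli (hXmeas a) (hXval a) (hXdist a) hq0 (hw0 a)
  have hproxy : ∑ a, (‖w a‖₊ / 2) ^ 2 ≤ Real.toNNReal (α * τ ^ 2 / 4) := by
    rw [← NNReal.coe_le_coe, Real.coe_toNNReal _ (by positivity)]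
    push_cast
    simp only [Real.norm_eq_abs, div_pow, sq_abs, ← Finset.sum_div]
    have := Finset.sum_sq_le_mul_of_le (fun a _ ↦ hw0 a) (fun a _ ↦ hwα a) (by positivity) hwsum
    linarith
  have htail := (hsum.mono hproxy).measure_abs_ge_le (mul_pos hβ hτ).le
  have hevent : ∀ ω, ∑ a, (X a ω * w a - q * w a) = (∑ a, X a ω * w a) - q * ∑ a, w a :=
    fun ω ↦ by rw [Finset.sum_sub_distrib, Finset.mul_sum]
  have hexp : -(β * τ) ^ 2 / (2 * (α * τ ^ 2 / 4)) = -2 * β ^ 2 / α := by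
    field_simp
    norm_num
  rw [← ofReal_measureReal]
  refine ENNReal.ofReal_le_ofReal ?_
  simpa only [hevent, Real.coe_toNNReal _ (by positivity : 0 ≤ α * τ ^ 2 / 4), hexp] using htail

/-- Concentration for block sampling.  Each advertiser `a`
contributes `w a = |B' ∩ B(a)|` slots of `B'`, with `0 ≤ w a ≤ ατ` and
`Σ_a w a = |B'| ≤ τ`.  Each advertiser is retained independently with
probability `q` (indicator `X a`), so `|B'[q]| = Σ_a X a · w a`.  Then for
every `β ∈ (0,1]`,
`Pr[| |B'[q]| − q·|B'| | ≥ βτ] ≤ 2·exp(−2β²/α)`. -/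
theorem stmt_7 {Ω : Type*} [MeasurableSpace Ω] (μ : Measure Ω)
    [IsProbabilityMeasure μ]
    {ι : Type*} [Fintype ι]
    (w : ι → ℝ) (α τ q β : ℝ)
    (hα : 0 < α) (hα1 : α ≤ 1) (hτ : 0 < τ)
    (hw0 : ∀ a, 0 ≤ w a) (hwα : ∀ a, w a ≤ α * τ)
    (hwsum : ∑ a, w a ≤ τ)
    (hq0 : 0 ≤ q) (hq1 : q ≤ 1)
    (X : ι → Ω → ℝ)
    (hXmeas : ∀ a, Measurable (X a))
    (hXval : ∀ a ω, X a ω = 0 ∨ X a ω = 1)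
    (hXdist : ∀ a, μ {ω | X a ω = 1} = ENNReal.ofReal q)
    (hXindep : iIndepFun X μ)
    (hβ : 0 < β) (hβ1 : β ≤ 1) :
    μ {ω | β * τ ≤ |(∑ a, X a ω * w a) - q * ∑ a, w a|} ≤
      ENNReal.ofReal (2 * Real.exp (-2 * β ^ 2 / α)) :=
  stmt_7_general μ w α τ q β hα hτ hw0 hwα hwsum hq0 X hXmeas hXval hXdist hXindep hβ
end

section
/- Under event ℰ' (with parameters r ∈ (0,1/2], α ∈ [τ^{-1},1]), the assignable user set P̂ = {p ∈ P(M∖M_T) : c(p) < c(p̂)} satisfies P̂ ⊆ P_o, where p̂ is the user at location ⌈(1−2r^{-1}α^{1/3})·|S_c(P(M_T),B(A_T))|⌉ of S_c(P(M_T),B(A_T)). -/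
open Finset

theorem Finset.eq_range_card_of_isLowerSet {S : Finset ℕ} (h : IsLowerSet (S : Set ℕ)) :
    S = range #S := by
  obtain hu | ⟨a, ha⟩ := h.eq_univ_or_Iio
  · exact absurd (hu ▸ S.finite_toSet) Set.infinite_univ
  · have hS : S = range a := by ext i; simp [← Finset.mem_coe, ha]
    rw [hS, card_range]

theorem isLowerSet_filter_lt_of_monotone_of_antitone {β : Type*} [LinearOrder β] {c v : ℕ → β}
    (hc : Monotone c) (hv : Antitone v) (N : ℕ) :
    IsLowerSet (((range N).filter fun i => c i < v i : Finset ℕ) : Set ℕ) := by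
  intro j i hij hj
  simp only [coe_filter, mem_range, Set.mem_ofPred_eq] at hj ⊢
  exact ⟨hij.trans_lt hj.1, (hc hij).trans_lt (hj.2.trans_le (hv hij))⟩

theorem lt_or_lt_of_monotone_of_antitone {α β : Type*} [LinearOrder α] [Preorder β] {c v : α → β}
    (hc : Monotone c) (hv : Antitone v) {τ p q : α} (hτ : v τ ≤ c τ) (hpq : c p < v q) :
    p < τ ∨ q < τ := by
  by_contra! h
  exact (hpq.trans_le ((hv h.2).trans (hτ.trans (hc h.1)))).false

theorem Finset.countP_sort {α : Type*} [LinearOrder α] (S : Finset α) (p : α → Prop)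
    [DecidablePred p] : (S.sort (· ≤ ·)).countP (fun a => decide (p a)) = #(S.filter p) := by
  rw [← Multiset.coe_countP, Finset.sort_eq, Multiset.countP_eq_card_filter]
  rfl

theorem List.countP_zip_lt_or_lt_le_max {α : Type*} [LinearOrder α] (τ : α) :
    ∀ {l₁ l₂ : List α}, l₁.Pairwise (· ≤ ·) → l₂.Pairwise (· ≤ ·) →
      (l₁.zip l₂).countP (fun x => decide (x.1 < τ ∨ x.2 < τ)) ≤
        max (l₁.countP (fun a => decide (a < τ))) (l₂.countP (fun a => decide (a < τ)))
  | [], _, _, _ => by simp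
  | _ :: _, [], _, _ => by simp
  | a :: t₁, b :: t₂, h₁, h₂ => by
    have ih := countP_zip_lt_or_lt_le_max τ h₁.of_cons h₂.of_cons
    have hz₁ : τ ≤ a → t₁.countP (fun a => decide (a < τ)) = 0 := fun ha =>
      countP_eq_zero.2 fun x hx => by simpa using ha.trans (rel_of_pairwise_cons h₁ hx)
    have hz₂ : τ ≤ b → t₂.countP (fun a => decide (a < τ)) = 0 := fun hb =>
      countP_eq_zero.2 fun x hx => by simpa using hb.trans (rel_of_pairwise_cons h₂ hx)
    simp only [zip_cons_cons, countP_cons]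
    generalize (t₁.zip t₂).countP (fun x => decide (x.1 < τ ∨ x.2 < τ)) = C at ih ⊢
    rcases lt_or_ge a τ with ha | ha <;> rcases lt_or_ge b τ with hb | hb <;>
      simp [ha, hb, hz₁, hz₂, not_lt.2] at ih ⊢ <;> omega

theorem canonSize_le_max {c v : ℕ → ℝ} {PT BT : Finset ℕ} (τ : ℕ)
    (h : ∀ p ∈ PT, ∀ q ∈ BT, c p < v q → p < τ ∨ q < τ) :
    canonSize c v PT BT ≤ max #(PT.filter (· < τ)) #(BT.filter (· < τ)) := by
  rw [canonSize, List.zip_map, List.countP_map, ← countP_sort, ← countP_sort]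
  refine le_trans (List.countP_mono_left fun x hx hcx => ?_)
    (List.countP_zip_lt_or_lt_le_max τ (pairwise_sort _ _) (pairwise_sort _ _))
  obtain ⟨hp, hq⟩ := List.of_mem_zip hx
  simpa using h _ ((mem_sort _).1 hp) _ ((mem_sort _).1 hq) (by simpa using hcx)

theorem one_sub_mul_le_of_abs_sub_le {r β τ A B s : ℝ} (hr : 0 < r) (hτ : 0 ≤ τ) (hA₀ : 0 ≤ A)
    (hs₀ : 0 ≤ s) (hs : s ≤ max A B) (hA : |A - r * τ| ≤ β * τ) (hB : |B - r * τ| ≤ β * τ) :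
    (1 - 2 * r⁻¹ * β) * s ≤ A := by
  rcases le_or_gt (1 - 2 * r⁻¹ * β) 0 with hx | hx
  · exact (mul_nonpos_of_nonpos_of_nonneg hx hs₀).trans hA₀
  have hA' := abs_le.1 hA
  have hB' := abs_le.1 hB
  have hsup : s ≤ r * τ + β * τ := hs.trans (max_le (by linarith) (by linarith))
  calc (1 - 2 * r⁻¹ * β) * s ≤ (1 - 2 * r⁻¹ * β) * (r * τ + β * τ) := by gcongr
    _ = r * τ - β * τ - 2 * r⁻¹ * β ^ 2 * τ := by field_simp; ring
    _ ≤ r * τ - β * τ := by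
      have : 0 ≤ r⁻¹ * β ^ 2 * τ := by positivity
      linarith
    _ ≤ A := by linarith

theorem Finset.lt_of_card_filter_le_le_card_filter_lt {α : Type*} [LinearOrder α]
    {S : Finset α} {x t : α} (hx : x ∈ S) (h : #(S.filter (· ≤ x)) ≤ #(S.filter (· < t))) :
    x < t := by
  by_contra! htx
  refine h.not_gt (card_lt_card ⟨monotone_filter_right S fun _ _ hy => (hy.trans_le htx).le, ?_⟩)
  intro hsub
  exact (mem_filter.1 (hsub (mem_filter.2 ⟨hx, le_rfl⟩))).2.not_ge htx

theorem stmt_11_general (n m : ℕ) (c v : ℕ → ℝ)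
    (hc : StrictMono c) (hv : StrictAnti v)
    (PT BT : Finset ℕ) (hPT : PT ⊆ Finset.range n) (hBT : BT ⊆ Finset.range m)
    (r α : ℝ) (hr : 0 < r)
    (Po : Finset ℕ)
    (hPo : Po = (Finset.range (min n m)).filter (fun i => c i < v i))
    (τ : ℕ) (hτ : τ = Po.card)
    (s : ℕ) (hs : s = canonSize c v PT BT)
    (L : ℕ) (hL : L = ⌈(1 - 2 * r⁻¹ * α ^ ((1 : ℝ) / 3)) * (s : ℝ)⌉₊)
    (phat : ℕ) (hphat₁ : phat ∈ PT)
    (hphat₂ : (PT.filter (fun q => q ≤ phat)).card = L)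
    (hE1 : |((Po ∩ PT).card : ℝ) - r * τ| ≤ α ^ ((1 : ℝ) / 3) * τ)
    (hE2 : |((Po ∩ BT).card : ℝ) - r * τ| ≤ α ^ ((1 : ℝ) / 3) * τ) :
    ∀ p : ℕ, p < n → p ∉ PT → c p < c phat → p ∈ Po := by
  intro p _ _ hcp
  have hPo_range : Po = range τ := by
    rw [hτ, hPo]
    exact eq_range_card_of_isLowerSet (isLowerSet_filter_lt_of_monotone_of_antitone
      hc.monotone hv.antitone _)
  have hinter : ∀ S : Finset ℕ, Po ∩ S = S.filter (· < τ) := fun S => by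
    ext; simp [hPo_range, and_comm]
  have hcross : ∀ p ∈ PT, ∀ q ∈ BT, c p < v q → p < τ ∨ q < τ := by
    intro p hp q hq hpq
    have := mem_range.1 (hPT hp)
    have := mem_range.1 (hBT hq)
    by_cases hτN : τ < min n m
    · refine lt_or_lt_of_monotone_of_antitone hc.monotone hv.antitone (not_lt.1 fun h => ?_) hpq
      have hτPo : τ ∈ Po := hPo ▸ mem_filter.2 ⟨mem_range.2 hτN, h⟩
      simp [hPo_range] at hτPo
    · omega
  have hs_max : (s : ℝ) ≤ max (#(Po ∩ PT) : ℝ) #(Po ∩ BT) := by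
    rw [hinter, hinter, hs]
    exact_mod_cast canonSize_le_max τ hcross
  have hL_le : L ≤ #(Po ∩ PT) := by
    rw [hL, Nat.ceil_le]
    exact one_sub_mul_le_of_abs_sub_le hr τ.cast_nonneg (Nat.cast_nonneg _) s.cast_nonneg
      hs_max hE1 hE2
  have hphat : phat < τ :=
    lt_of_card_filter_le_le_card_filter_lt hphat₁ (hphat₂ ▸ hinter PT ▸ hL_le)
  rw [hPo_range, mem_range]
  exact (hc.lt_iff_lt.1 hcp).trans hphat

/-- Under event `ℰ'` (the four concentration inequalities
with slack `α^{1/3}τ`), the assignable user set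
`P̂ = {p ∈ P(M∖M_T) : c p < c p̂}` satisfies `P̂ ⊆ P_o`, where `p̂` is the user
at (1-based, non-dummy) location `L = ⌈(1−2r⁻¹α^{1/3})·|S_c(P(M_T),B(A_T))|⌉`
of `S_c(P(M_T),B(A_T))`, i.e. the `L`-th cheapest user of `PT`. -/
theorem stmt_11 (n m : ℕ) (c v : ℕ → ℝ)
    (hc : StrictMono c) (hv : StrictAnti v)
    (hcv : ∀ i j : ℕ, c i ≠ v j)
    (PT BT : Finset ℕ) (hPT : PT ⊆ Finset.range n) (hBT : BT ⊆ Finset.range m)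
    (r α : ℝ) (hr : 0 < r) (hr2 : r ≤ 1 / 2)
    (Po : Finset ℕ)
    (hPo : Po = (Finset.range (min n m)).filter (fun i => c i < v i))
    (τ : ℕ) (hτ : τ = Po.card) (hτpos : 0 < τ)
    (hα : 1 / (τ : ℝ) ≤ α) (hα1 : α ≤ 1)
    (s : ℕ) (hs : s = canonSize c v PT BT)
    (L : ℕ) (hL : L = ⌈(1 - 2 * r⁻¹ * α ^ ((1 : ℝ) / 3)) * (s : ℝ)⌉₊)
    (hLpos : 0 < L)
    (phat : ℕ) (hphat₁ : phat ∈ PT)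
    (hphat₂ : (PT.filter (fun q => q ≤ phat)).card = L)
    (k : ℕ) (hk : k = ⌈(1 - 6 * r⁻¹ * α ^ ((1 : ℝ) / 3)) * (τ : ℝ)⌉₊)
    (hE1 : |((Po ∩ PT).card : ℝ) - r * τ| ≤ α ^ ((1 : ℝ) / 3) * τ)
    (hE2 : |((Po ∩ BT).card : ℝ) - r * τ| ≤ α ^ ((1 : ℝ) / 3) * τ)
    (hE3 : |((Finset.range k ∩ PT).card : ℝ) - r * k| ≤ α ^ ((1 : ℝ) / 3) * τ)
    (hE4 : |((Finset.range k ∩ BT).card : ℝ) - r * k| ≤ α ^ ((1 : ℝ) / 3) * τ) :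
    ∀ p : ℕ, p < n → p ∉ PT → c p < c phat → p ∈ Po :=
  stmt_11_general n m c v hc hv PT BT hPT hBT r α hr Po hPo τ hτ s hs L hL phat hphat₁ hphat₂ hE1
    hE2
end

section
/- Under event ℰ', P̃ ∖ P(M_T) ⊆ P̂: every user of P̃ not belonging to a mediator of M_T has cost strictly less than c(p̂), hence is assignable. -/
open Finset

theorem Finset.eq_range_card_of_forall_le_mem {S : Finset ℕ}
    (h : ∀ j ∈ S, ∀ i ≤ j, i ∈ S) : S = range #S := by
  refine (eq_of_subset_of_card_le (fun i hi => ?_) (by simp)).symm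
  by_contra hiS
  have hsub : S ⊆ range i := fun j hj => mem_range.2 (not_le.1 fun hij => hiS (h j hj i hij))
  have := card_le_card hsub
  simp only [card_range, mem_range] at this hi
  omega

theorem Finset.card_filter_eq_countP_sort {α : Type*} (S : Finset α) (r : α → α → Prop)
    [DecidableRel r] [IsTrans α r] [Std.Antisymm r] [Std.Total r]
    (p : α → Prop) [DecidablePred p] :
    #(S.filter p) = (S.sort r).countP (fun x => decide (p x)) := by
  rw [← Multiset.coe_countP, sort_eq]
  exact (Multiset.countP_eq_card_filter _ _).symm

theorem List.getElem_lt_of_lt_countP {α : Type*} [LinearOrder α] {l : List α}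
    (hl : l.Pairwise (· ≤ ·)) {t : α} {i : ℕ} (hi : i < l.length)
    (h : i < l.countP (fun x => decide (x < t))) : l[i] < t := by
  by_contra! hge
  have hdrop : (l.drop i).countP (fun x => decide (x < t)) = 0 := by
    rw [List.countP_eq_zero]
    intro y hy
    obtain ⟨j, hj, rfl⟩ := List.mem_iff_getElem.1 hy
    have hij : i + j < l.length := by simp only [List.length_drop] at hj; omega
    have hle : l[i] ≤ l[i + j] := hl.rel_get_of_le (a := ⟨i, hi⟩) (b := ⟨i + j, hij⟩) (by simp)
    simpa only [List.getElem_drop, decide_eq_true_eq, not_lt] using hge.trans hle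
  have hsplit :=
    List.countP_append (l₁ := l.take i) (l₂ := l.drop i) (p := fun x => decide (x < t))
  rw [List.take_append_drop, hdrop] at hsplit
  have := (l.take i).countP_le_length (p := fun x => decide (x < t))
  simp only [List.length_take] at this
  omega

theorem List.le_countP_of_forall_getElem {α : Type*} (l : List α) (p : α → Bool) {M : ℕ}
    (hM : M ≤ l.length) (h : ∀ j (hj : j < M), p l[j]) : M ≤ l.countP p := by
  have htake : (l.take M).countP p = M := by
    rw [List.countP_eq_length.2, List.length_take_of_le hM]
    intro x hx
    obtain ⟨j, hj, rfl⟩ := List.mem_iff_getElem.1 hx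
    simp only [List.length_take, lt_min_iff] at hj
    simpa using h j hj.1
  exact htake ▸ (List.take_sublist M l).countP_le

theorem min_card_filter_lt_le_canonSize (c v : ℕ → ℝ) (PT BT : Finset ℕ) (t : ℕ)
    (hlt : ∀ i < t, ∀ j < t, c i < v j) :
    min #(PT.filter (· < t)) #(BT.filter (· < t)) ≤ canonSize c v PT BT := by
  have hP := card_filter_eq_countP_sort PT (· ≤ ·) (· < t)
  have hB := card_filter_eq_countP_sort BT (· ≤ ·) (· < t)
  refine List.le_countP_of_forall_getElem _ _ ?_ fun j hj => ?_
  · simp only [List.length_zip, List.length_map, length_sort]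
    exact min_le_min (card_filter_le _ _) (card_filter_le _ _)
  · simp only [List.getElem_zip, List.getElem_map, decide_eq_true_eq]
    exact hlt _ (List.getElem_lt_of_lt_countP (pairwise_sort _ _) _ (by omega)) _
      (List.getElem_lt_of_lt_countP (pairwise_sort _ _) _ (by omega))

theorem range_filter_eq_range_card {β : Type*} [LinearOrder β] {c v : ℕ → β}
    (hc : Monotone c) (hv : Antitone v) (N : ℕ) :
    (range N).filter (fun i => c i < v i) = range #((range N).filter (fun i => c i < v i)) :=
  eq_range_card_of_forall_le_mem fun j hj i hij => by
    simp only [mem_filter, mem_range] at hj ⊢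
    exact ⟨by omega, (hc hij).trans_lt (hj.2.trans_le (hv hij))⟩

theorem lt_of_diag_lt {β : Type*} [LinearOrder β] {c v : ℕ → β} (hc : Monotone c)
    (hv : Antitone v) {i j : ℕ} (hi : c i < v i) (hj : c j < v j) : c i < v j := by
  rcases le_total i j with hij | hji
  · exact (hc hij).trans_lt hj
  · exact hi.trans_le (hv hji)

theorem min_card_inter_le_canonSize {c v : ℕ → ℝ} (hc : Monotone c) (hv : Antitone v)
    (N : ℕ) (PT BT : Finset ℕ) :
    min #((range N).filter (fun i => c i < v i) ∩ PT) #((range N).filter (fun i => c i < v i) ∩ BT)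
      ≤ canonSize c v PT BT := by
  set Po := (range N).filter (fun i => c i < v i)
  have hPo : Po = range #Po := range_filter_eq_range_card hc hv N
  have hinter : ∀ S : Finset ℕ, Po ∩ S = S.filter (· < #Po) := fun S => by
    ext; rw [hPo]; simp [and_comm]
  rw [hinter, hinter]
  refine min_card_filter_lt_le_canonSize c v PT BT _ fun i hi j hj => ?_
  have hdiag : ∀ x < #Po, c x < v x := fun x hx =>
    (mem_filter.1 (hPo ▸ mem_range.2 hx : x ∈ Po)).2
  exact lt_of_diag_lt hc hv (hdiag i hi) (hdiag j hj)

theorem one_le_rpow_mul_of_inv_le {τ α : ℝ} (hτ : 1 ≤ τ) (hα : 1 / τ ≤ α) :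
    1 ≤ α ^ ((1 : ℝ) / 3) * τ := by
  have hτ0 : 0 < τ := one_pos.trans_le hτ
  have hinv : 1 / τ ≤ 1 := (div_le_one hτ0).2 hτ
  calc 1 = 1 / τ * τ := by field_simp
    _ ≤ (1 / τ) ^ ((1 : ℝ) / 3) * τ := by
        gcongr
        simpa using Real.rpow_le_rpow_of_exponent_ge (by positivity) hinv
          (by norm_num : (1 : ℝ) / 3 ≤ 1)
    _ ≤ α ^ ((1 : ℝ) / 3) * τ := by gcongr

theorem lt_of_concentration {r β τ k s x L : ℝ} (hr : 0 < r) (hr2 : r ≤ 1 / 2) (hβ : 0 ≤ β)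
    (hβτ : 1 ≤ β * τ) (hcoef : 0 ≤ 1 - 2 * r⁻¹ * β) (hk : k < (1 - 6 * r⁻¹ * β) * τ + 1)
    (hx : x ≤ r * k + β * τ) (hs : r * τ - β * τ ≤ s) (hL : (1 - 2 * r⁻¹ * β) * s ≤ L) :
    x < L := by
  have hrr : r * r⁻¹ = 1 := mul_inv_cancel₀ hr.ne'
  have hsq : 0 ≤ r⁻¹ * β * (β * τ) := by positivity
  -- the `+ 1` from rounding `k` up is absorbed by `r ≤ 1 / 2 < 2 β τ`
  calc x < r * ((1 - 6 * r⁻¹ * β) * τ + 1) + β * τ := by nlinarith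
    _ ≤ (1 - 2 * r⁻¹ * β) * (r * τ - β * τ) := by nlinarith
    _ ≤ (1 - 2 * r⁻¹ * β) * s := mul_le_mul_of_nonneg_left hs hcoef
    _ ≤ L := hL

theorem le_of_card_range_inter_lt {S : Finset ℕ} {k a : ℕ}
    (h : #(range k ∩ S) < #(S.filter (· ≤ a))) : k ≤ a := by
  by_contra! hak
  refine h.not_ge (card_le_card fun x hx => ?_)
  simp only [mem_filter, mem_inter, mem_range] at hx ⊢
  exact ⟨by omega, hx.1⟩

theorem stmt_12_general (n m : ℕ) (c v : ℕ → ℝ)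
    (hc : StrictMono c) (hv : StrictAnti v)
    (PT BT : Finset ℕ)
    (r α : ℝ) (hr : 0 < r) (hr2 : r ≤ 1 / 2)
    (Po : Finset ℕ)
    (hPo : Po = (Finset.range (min n m)).filter (fun i => c i < v i))
    (τ : ℕ)
    (hα : 1 / (τ : ℝ) ≤ α)
    (s : ℕ) (hs : s = canonSize c v PT BT)
    (L : ℕ) (hL : L = ⌈(1 - 2 * r⁻¹ * α ^ ((1 : ℝ) / 3)) * (s : ℝ)⌉₊)
    (phat : ℕ)
    (hphat₂ : (PT.filter (fun q => q ≤ phat)).card = L)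
    (k : ℕ) (hk : k = ⌈(1 - 6 * r⁻¹ * α ^ ((1 : ℝ) / 3)) * (τ : ℝ)⌉₊)
    (hE1 : |((Po ∩ PT).card : ℝ) - r * τ| ≤ α ^ ((1 : ℝ) / 3) * τ)
    (hE2 : |((Po ∩ BT).card : ℝ) - r * τ| ≤ α ^ ((1 : ℝ) / 3) * τ)
    (hE3 : |((Finset.range k ∩ PT).card : ℝ) - r * k| ≤ α ^ ((1 : ℝ) / 3) * τ) :
    ∀ p ∈ Finset.range k, p ∉ PT → c p < c phat := by
  intro p hp _
  set β := α ^ ((1 : ℝ) / 3)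
  have hk0 : 0 < (1 - 6 * r⁻¹ * β) * τ :=
    Nat.ceil_pos.1 (hk ▸ Nat.zero_lt_of_lt (mem_range.1 hp))
  have hτ0 : 0 < τ := Nat.pos_of_ne_zero fun h => by simp [h] at hk0
  have hβτ : 1 ≤ β * τ := one_le_rpow_mul_of_inv_le (by exact_mod_cast hτ0) hα
  have hβ : 0 ≤ β := Real.rpow_nonneg ((by positivity : (0 : ℝ) < 1 / τ).trans_le hα).le _
  have hsτ : r * τ - β * τ ≤ s := by
    have hmin : (min #(Po ∩ PT) #(Po ∩ BT) : ℝ) ≤ s := by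
      exact_mod_cast hs ▸ hPo ▸ min_card_inter_le_canonSize hc.monotone hv.antitone _ PT BT
    exact (le_min (by linarith [(abs_le.1 hE1).1]) (by linarith [(abs_le.1 hE2).1])).trans hmin
  have hcoef : 0 ≤ 1 - 2 * r⁻¹ * β := by
    have : 0 < 1 - 6 * r⁻¹ * β := pos_of_mul_pos_left hk0 (by positivity)
    have : 0 ≤ r⁻¹ * β := by positivity
    linarith
  have hcard : #(range k ∩ PT) < L := by
    have := lt_of_concentration (x := #(range k ∩ PT)) (k := k) hr hr2 hβ hβτ hcoef
      (hk ▸ Nat.ceil_lt_add_one hk0.le) (by linarith [(abs_le.1 hE3).2]) hsτ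
      (hL ▸ Nat.le_ceil _)
    exact_mod_cast this
  have hk_le : k ≤ phat := le_of_card_range_inter_lt (hphat₂ ▸ hcard)
  exact hc (by simp only [mem_range] at hp; omega)

/-- Under event `ℰ'`, `P̃ ∖ P(M_T) ⊆ P̂`: every user of
`P̃` (the `k = ⌈(1−6r⁻¹α^{1/3})τ⌉` cheapest users of `P_o`, here the indices
`Finset.range k`, with `P̃` nonempty) that does not belong to a mediator of
`M_T` has cost strictly less than `c p̂`, hence is assignable. -/
theorem stmt_12 (n m : ℕ) (c v : ℕ → ℝ)
    (hc : StrictMono c) (hv : StrictAnti v)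
    (hcv : ∀ i j : ℕ, c i ≠ v j)
    (PT BT : Finset ℕ) (hPT : PT ⊆ Finset.range n) (hBT : BT ⊆ Finset.range m)
    (r α : ℝ) (hr : 0 < r) (hr2 : r ≤ 1 / 2)
    (Po : Finset ℕ)
    (hPo : Po = (Finset.range (min n m)).filter (fun i => c i < v i))
    (τ : ℕ) (hτ : τ = Po.card) (hτpos : 0 < τ)
    (hα : 1 / (τ : ℝ) ≤ α) (hα1 : α ≤ 1)
    (s : ℕ) (hs : s = canonSize c v PT BT)
    (L : ℕ) (hL : L = ⌈(1 - 2 * r⁻¹ * α ^ ((1 : ℝ) / 3)) * (s : ℝ)⌉₊)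
    (hLpos : 0 < L)
    (phat : ℕ) (hphat₁ : phat ∈ PT)
    (hphat₂ : (PT.filter (fun q => q ≤ phat)).card = L)
    (k : ℕ) (hk : k = ⌈(1 - 6 * r⁻¹ * α ^ ((1 : ℝ) / 3)) * (τ : ℝ)⌉₊)
    (hkpos : 0 < k)
    (hE1 : |((Po ∩ PT).card : ℝ) - r * τ| ≤ α ^ ((1 : ℝ) / 3) * τ)
    (hE2 : |((Po ∩ BT).card : ℝ) - r * τ| ≤ α ^ ((1 : ℝ) / 3) * τ)
    (hE3 : |((Finset.range k ∩ PT).card : ℝ) - r * k| ≤ α ^ ((1 : ℝ) / 3) * τ)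
    (hE4 : |((Finset.range k ∩ BT).card : ℝ) - r * k| ≤ α ^ ((1 : ℝ) / 3) * τ) :
    ∀ p ∈ Finset.range k, p ∉ PT → c p < c phat :=
  stmt_12_general n m c v hc hv PT BT r α hr hr2 Po hPo τ hα s hs L hL phat hphat₂ k hk hE1 hE2 hE3
end
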